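/- arXiv:0906.1267 — 5 statements merged into one kernel-verified Lean document; each statement's English description precedes it below -/
import Mathlib

section
/- Let n ≥ 1, let x₀ ∈ ℝⁿ, let c > 0, and let f : ℝⁿ → ℝ be a 1-Lipschitz function with f(x₀) = 0. Then the function g : ℝⁿ → ℝ defined by g(x) = f(x)·exp(−‖x − x₀‖/c) is 1-Lipschitz. -/
/-!
Order the points so that `b = ‖y - x₀‖ ≤ a = ‖x - x₀‖` and write `φ t = exp (-(t / c))`. Then
`g x - g y = (f x - f y) φ(a) + f y (φ(a) - φ(b))`, where `|f y| ≤ b` because `f x₀ = 0`, and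
`φ(b) - φ(a) ≤ (a - b)/c · φ(b)` by convexity of `exp`. Since `a - b ≤ ‖x - y‖` and `φ(a) ≤ φ(b)`,
both terms together are at most `‖x - y‖ (1 + b/c) exp (-(b/c)) ≤ ‖x - y‖`.
-/

open Real

lemma one_add_mul_exp_neg_le_one (x : ℝ) : (1 + x) * exp (-x) ≤ 1 :=
  calc (1 + x) * exp (-x) ≤ exp x * exp (-x) := by gcongr; linarith [add_one_le_exp x]
    _ = 1 := by rw [← exp_add, add_neg_cancel, exp_zero]

lemma exp_neg_sub_exp_neg_le (a b : ℝ) : exp (-b) - exp (-a) ≤ (a - b) * exp (-b) :=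
  calc exp (-b) - exp (-a) = (1 - exp (-(a - b))) * exp (-b) := by
        rw [sub_mul, one_mul, ← exp_add]; ring_nf
    _ ≤ (a - b) * exp (-b) := by
        have := one_sub_le_exp_neg (a - b)
        gcongr ?_ * _
        linarith

lemma abs_mul_exp_neg_div_sub_le {a b c d u v : ℝ} (hc : 0 < c) (hba : b ≤ a)
    (hv : |v| ≤ b) (huv : |u - v| ≤ d) (had : a - b ≤ d) :
    |u * exp (-(a / c)) - v * exp (-(b / c))| ≤ d := by
  have hb : 0 ≤ b := (abs_nonneg v).trans hv
  have hd : 0 ≤ d := (abs_nonneg _).trans huv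
  have hab : exp (-(a / c)) ≤ exp (-(b / c)) := by gcongr
  have hdiff := exp_neg_sub_exp_neg_le (a / c) (b / c)
  calc |u * exp (-(a / c)) - v * exp (-(b / c))|
      = |(u - v) * exp (-(a / c)) - v * (exp (-(b / c)) - exp (-(a / c)))| := by ring_nf
    _ ≤ |u - v| * exp (-(a / c)) + |v| * (exp (-(b / c)) - exp (-(a / c))) := by
        refine (abs_sub _ _).trans ?_
        rw [abs_mul, abs_mul, abs_of_pos (exp_pos _), abs_of_nonneg (sub_nonneg.2 hab)]
    _ ≤ d * exp (-(b / c)) + b * ((a / c - b / c) * exp (-(b / c))) := by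
        gcongr
    _ = d * exp (-(b / c)) + (a - b) * (b / c * exp (-(b / c))) := by ring
    _ ≤ d * exp (-(b / c)) + d * (b / c * exp (-(b / c))) := by
        have : 0 ≤ b / c * exp (-(b / c)) := by positivity
        gcongr
    _ = d * ((1 + b / c) * exp (-(b / c))) := by ring
    _ ≤ d := mul_le_of_le_one_right hd (one_add_mul_exp_neg_le_one _)

lemma LipschitzWith.mul_exp_neg_dist_div {X : Type*} [PseudoMetricSpace X] {f : X → ℝ}
    (hf : LipschitzWith 1 f) {x₀ : X} (hf₀ : f x₀ = 0) {c : ℝ} (hc : 0 < c) :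
    LipschitzWith 1 fun x ↦ f x * exp (-(dist x x₀ / c)) := by
  refine LipschitzWith.of_dist_le_mul fun x y ↦ ?_
  rw [NNReal.coe_one, one_mul, Real.dist_eq]
  wlog h : dist y x₀ ≤ dist x x₀ generalizing x y
  · rw [abs_sub_comm, dist_comm x y]
    exact this y x (le_of_not_ge h)
  refine abs_mul_exp_neg_div_sub_le hc h ?_ ?_ ?_
  · simpa [hf₀, Real.dist_eq] using hf.dist_le_mul y x₀
  · simpa [Real.dist_eq] using hf.dist_le_mul x y
  · linarith [dist_triangle x y x₀]

theorem lipschitz_mul_exp_neg_dist_general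
    (n : ℕ) (x₀ : EuclideanSpace ℝ (Fin n)) (c : ℝ) (hc : 0 < c)
    (f : EuclideanSpace ℝ (Fin n) → ℝ)
    (hf_lip : ∀ x y, |f x - f y| ≤ ‖x - y‖)
    (hf_x₀ : f x₀ = 0) :
    ∀ x y, |f x * Real.exp (-(‖x - x₀‖ / c)) - f y * Real.exp (-(‖y - x₀‖ / c))| ≤ ‖x - y‖ := by
  have hf : LipschitzWith 1 f := .of_dist_le_mul fun x y ↦ by
    simpa [Real.dist_eq, dist_eq_norm] using hf_lip x y
  intro x y
  simpa [Real.dist_eq, dist_eq_norm] using (hf.mul_exp_neg_dist_div hf_x₀ hc).dist_le_mul x y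

/-- If `f : ℝⁿ → ℝ` is `1`-Lipschitz with `f x₀ = 0` and `c > 0`, then
`g x = f x · exp (−‖x − x₀‖ / c)` is `1`-Lipschitz. -/
theorem lipschitz_mul_exp_neg_dist
    (n : ℕ) (hn : 1 ≤ n) (x₀ : EuclideanSpace ℝ (Fin n)) (c : ℝ) (hc : 0 < c)
    (f : EuclideanSpace ℝ (Fin n) → ℝ)
    (hf_lip : ∀ x y, |f x - f y| ≤ ‖x - y‖)
    (hf_x₀ : f x₀ = 0) :
    ∀ x y, |f x * Real.exp (-(‖x - x₀‖ / c)) - f y * Real.exp (-(‖y - x₀‖ / c))| ≤ ‖x - y‖ :=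
  lipschitz_mul_exp_neg_dist_general n x₀ c hc f hf_lip hf_x₀
end

section
/- Let n ≥ 1 and let μ₁, μ₂ be Borel probability measures on ℝⁿ. Then the supremum, taken in the extended nonnegative reals, of ∫ f dμ₁ − ∫ f dμ₂ over all continuous 1-Lipschitz functions f : ℝⁿ → ℝ vanishing at infinity equals the supremum of ∫ f dμ₁ − ∫ f dμ₂ over all 1-Lipschitz functions f : ℝⁿ → ℝ that are integrable with respect to both μ₁ and μ₂. -/
/-!
A continuous function vanishing at infinity is bounded, hence integrable for any finite measure, so
the left supremum is at most the right one. Conversely, a `1`-Lipschitz integrable `f` is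
approximated by clamping it between `±max (k - ‖x‖) 0`: the clamped functions are still
`1`-Lipschitz (as min/max of `1`-Lipschitz functions), compactly supported, dominated by `|f|` and
converge to `f` pointwise, so their integrals converge by dominated convergence.
-/

open Filter Topology MeasureTheory

section ConeTruncation

variable {α : Type*} [PseudoMetricSpace α]

noncomputable def coneCutoff (x₀ : α) (r : ℝ) (x : α) : ℝ := max (r - dist x x₀) 0

noncomputable def truncateByCone (f : α → ℝ) (x₀ : α) (r : ℝ) (x : α) : ℝ :=
  max (min (f x) (coneCutoff x₀ r x)) (-coneCutoff x₀ r x)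

variable {f : α → ℝ} {x₀ x : α} {r : ℝ}

theorem lipschitzWith_coneCutoff (x₀ : α) (r : ℝ) : LipschitzWith 1 (coneCutoff x₀ r) := by
  have h := ((LipschitzWith.const r).sub (LipschitzWith.dist_left x₀)).max_const 0
  rwa [zero_add] at h

theorem LipschitzWith.truncateByCone (hf : LipschitzWith 1 f) (x₀ : α) (r : ℝ) :
    LipschitzWith 1 (truncateByCone f x₀ r) := by
  have h := (hf.min (lipschitzWith_coneCutoff x₀ r)).max (lipschitzWith_coneCutoff x₀ r).neg
  rwa [max_self, max_self] at h

theorem abs_truncateByCone_le : |truncateByCone f x₀ r x| ≤ |f x| := by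
  have : 0 ≤ coneCutoff x₀ r x := le_max_right _ _
  simp only [truncateByCone, abs_le]
  constructor
  · exact le_max_of_le_left (le_min (neg_abs_le _) (by linarith [abs_nonneg (f x)]))
  · exact max_le (min_le_of_left_le (le_abs_self _)) (by linarith [abs_nonneg (f x)])

theorem truncateByCone_eq_zero_of_le_dist (h : r ≤ dist x x₀) : truncateByCone f x₀ r x = 0 := by
  have : coneCutoff x₀ r x = 0 := max_eq_right (by linarith)
  simp only [truncateByCone, this, neg_zero]
  exact max_eq_right (min_le_right _ _)

theorem truncateByCone_eq_self_of_le (h : |f x| + dist x x₀ ≤ r) :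
    truncateByCone f x₀ r x = f x := by
  have : |f x| ≤ coneCutoff x₀ r x := le_max_of_le_left (by linarith)
  rw [truncateByCone, min_eq_left ((le_abs_self _).trans this)]
  exact max_eq_left ((neg_le_neg this).trans (neg_abs_le _))

theorem hasCompactSupport_truncateByCone [ProperSpace α] (f : α → ℝ) (x₀ : α) (r : ℝ) :
    HasCompactSupport (truncateByCone f x₀ r) :=
  HasCompactSupport.intro (isCompact_closedBall x₀ r) fun _ hx =>
    truncateByCone_eq_zero_of_le_dist (not_le.1 hx).le

theorem tendsto_truncateByCone_atTop (f : α → ℝ) (x₀ x : α) :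
    Tendsto (fun k : ℕ => truncateByCone f x₀ k x) atTop (𝓝 (f x)) :=
  tendsto_const_nhds.congr' <|
    (tendsto_natCast_atTop_atTop.eventually_ge_atTop (|f x| + dist x x₀)).mono fun _ hk =>
      (truncateByCone_eq_self_of_le hk).symm

theorem tendsto_integral_truncateByCone [MeasurableSpace α] [OpensMeasurableSpace α]
    {μ : Measure α} (hf : Integrable f μ) (x₀ : α) :
    Tendsto (fun k : ℕ => ∫ x, truncateByCone f x₀ k x ∂μ) atTop (𝓝 (∫ x, f x ∂μ)) := by
  have hmeas (k : ℕ) : AEStronglyMeasurable (truncateByCone f x₀ k) μ := by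
    have hc := (lipschitzWith_coneCutoff x₀ (k : ℝ)).continuous.aestronglyMeasurable (μ := μ)
    exact (hf.aestronglyMeasurable.inf hc).sup hc.neg
  exact tendsto_integral_of_dominated_convergence (fun x => |f x|) hmeas hf.abs
    (fun _ => .of_forall fun _ => abs_truncateByCone_le)
    (.of_forall (tendsto_truncateByCone_atTop f x₀))

end ConeTruncation

theorem Continuous.integrable_of_tendsto_cocompact {α E : Type*} [TopologicalSpace α]
    [MeasurableSpace α] [OpensMeasurableSpace α] [NormedAddCommGroup E] [SecondCountableTopology E]
    [MeasurableSpace E] [BorelSpace E] {f : α → E} (hc : Continuous f)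
    (h0 : Tendsto f (cocompact α) (𝓝 0)) (μ : Measure α) [IsFiniteMeasure μ] :
    Integrable f μ :=
  (ZeroAtInftyContinuousMap.mk ⟨f, hc⟩ h0).toBCF.integrable μ

theorem lipschitzWith_one_iff_abs_sub_le {E : Type*} [SeminormedAddCommGroup E] {f : E → ℝ} :
    LipschitzWith 1 f ↔ ∀ x y, |f x - f y| ≤ ‖x - y‖ := by
  simp [lipschitzWith_iff_dist_le_mul, dist_eq_norm]

theorem sup_continuous_vanishing_eq_sup_integrable_general
    (n : ℕ)
    (μ₁ μ₂ : Measure (EuclideanSpace ℝ (Fin n)))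
    [IsProbabilityMeasure μ₁] [IsProbabilityMeasure μ₂] :
    (⨆ f : {f : EuclideanSpace ℝ (Fin n) → ℝ //
        Continuous f ∧ (∀ x y, |f x - f y| ≤ ‖x - y‖) ∧
        Tendsto f (cocompact (EuclideanSpace ℝ (Fin n))) (nhds 0)},
      ENNReal.ofReal ((∫ x, f.1 x ∂μ₁) - ∫ x, f.1 x ∂μ₂)) =
    (⨆ f : {f : EuclideanSpace ℝ (Fin n) → ℝ //
        (∀ x y, |f x - f y| ≤ ‖x - y‖) ∧ Integrable f μ₁ ∧ Integrable f μ₂},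
      ENNReal.ofReal ((∫ x, f.1 x ∂μ₁) - ∫ x, f.1 x ∂μ₂)) := by
  refine le_antisymm (iSup_le fun ⟨f, hc, hl, h0⟩ => ?_) (iSup_le fun ⟨f, hl, h₁, h₂⟩ => ?_)
  · exact le_iSup_of_le ⟨f, hl, hc.integrable_of_tendsto_cocompact h0 μ₁,
      hc.integrable_of_tendsto_cocompact h0 μ₂⟩ le_rfl
  · have hL : LipschitzWith 1 f := lipschitzWith_one_iff_abs_sub_le.2 hl
    have hlim := (ENNReal.continuous_ofReal.tendsto _).comp
      ((tendsto_integral_truncateByCone h₁ 0).sub (tendsto_integral_truncateByCone h₂ 0))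
    refine le_of_tendsto' hlim fun k => le_iSup_of_le ⟨truncateByCone f 0 k,
      (hL.truncateByCone 0 k).continuous,
      lipschitzWith_one_iff_abs_sub_le.1 (hL.truncateByCone 0 k),
      (hasCompactSupport_truncateByCone f 0 k).is_zero_at_infty⟩ le_rfl

/-- For Borel probability measures `μ₁, μ₂` on `ℝⁿ`, the supremum (in `[0,∞]`)
of `∫ f dμ₁ − ∫ f dμ₂` over continuous `1`-Lipschitz functions vanishing at infinity equals
the supremum over `1`-Lipschitz functions integrable with respect to both measures
(the Kantorovich dual expression for the Wasserstein distance of order 1). -/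
theorem sup_continuous_vanishing_eq_sup_integrable
    (n : ℕ) (hn : 1 ≤ n)
    (μ₁ μ₂ : Measure (EuclideanSpace ℝ (Fin n)))
    [IsProbabilityMeasure μ₁] [IsProbabilityMeasure μ₂] :
    (⨆ f : {f : EuclideanSpace ℝ (Fin n) → ℝ //
        Continuous f ∧ (∀ x y, |f x - f y| ≤ ‖x - y‖) ∧
        Tendsto f (cocompact (EuclideanSpace ℝ (Fin n))) (nhds 0)},
      ENNReal.ofReal ((∫ x, f.1 x ∂μ₁) - ∫ x, f.1 x ∂μ₂)) =
    (⨆ f : {f : EuclideanSpace ℝ (Fin n) → ℝ //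
        (∀ x y, |f x - f y| ≤ ‖x - y‖) ∧ Integrable f μ₁ ∧ Integrable f μ₂},
      ENNReal.ofReal ((∫ x, f.1 x ∂μ₁) - ∫ x, f.1 x ∂μ₂)) :=
  sup_continuous_vanishing_eq_sup_integrable_general n μ₁ μ₂
end

section
/- There is no continuous function θ : [0,1] → ℝ such that sin((θ(1) − θ(0))/2) ≠ 0 and |sin((θ(t) − θ(s))/2)| = |t − s| · |sin((θ(1) − θ(0))/2)| for all s, t ∈ [0,1]. -/
/-!
Already the midpoint `t = 1/2` is impossible. With `a = (θ(1/2) − θ 0)/2` and `b = (θ 1 − θ(1/2))/2`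
the hypothesis gives `|sin a| = |sin b| = c/2` and `|sin (a + b)| = c` for `c = |sin ((θ 1 − θ 0)/2)| > 0`.
But `|sin (a + b)| ≤ |sin a| |cos b| + |cos a| |sin b|`, and `|cos a|, |cos b| < 1` because
`sin a, sin b ≠ 0`, so `|sin (a + b)| < |sin a| + |sin b| = c`.
-/

namespace Real

theorem abs_cos_lt_one_of_sin_ne_zero {x : ℝ} (hx : sin x ≠ 0) : |cos x| < 1 := by
  rw [← sq_lt_one_iff_abs_lt_one, ← sin_sq_add_cos_sq x, lt_add_iff_pos_left]
  positivity

theorem abs_sin_add_lt {a b : ℝ} (ha : sin a ≠ 0) (hb : sin b ≠ 0) :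
    |sin (a + b)| < |sin a| + |sin b| := by
  have hcos_a := abs_cos_lt_one_of_sin_ne_zero ha
  have hcos_b := abs_cos_lt_one_of_sin_ne_zero hb
  have hsin_a : 0 < |sin a| := abs_pos.mpr ha
  have hsin_b : 0 < |sin b| := abs_pos.mpr hb
  calc |sin (a + b)| = |sin a * cos b + cos a * sin b| := by rw [sin_add]
    _ ≤ |sin a| * |cos b| + |cos a| * |sin b| := by
      simpa only [abs_mul] using abs_add_le (sin a * cos b) (cos a * sin b)
    _ < |sin a| + |sin b| := by nlinarith

end Real

/-- there is no continuous `θ : [0,1] → ℝ` with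
`sin((θ(1) − θ(0))/2) ≠ 0` such that
`|sin((θ(t) − θ(s))/2)| = |t − s| · |sin((θ(1) − θ(0))/2)|` for all `s, t ∈ [0,1]`. -/
theorem no_geodesic_curve_on_circle_of_states :
    ¬ ∃ θ : ℝ → ℝ, ContinuousOn θ (Set.Icc 0 1) ∧
      Real.sin ((θ 1 - θ 0) / 2) ≠ 0 ∧
      ∀ s ∈ Set.Icc (0 : ℝ) 1, ∀ t ∈ Set.Icc (0 : ℝ) 1,
        |Real.sin ((θ t - θ s) / 2)| = |t - s| * |Real.sin ((θ 1 - θ 0) / 2)| := by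
  rintro ⟨θ, -, hne, h⟩
  set c := |Real.sin ((θ 1 - θ 0) / 2)|
  have hc : 0 < c := abs_pos.mpr hne
  have first_half : |Real.sin ((θ (1 / 2) - θ 0) / 2)| = c / 2 := by
    rw [h 0 (by norm_num) (1 / 2) (by norm_num)]; norm_num; ring
  have second_half : |Real.sin ((θ 1 - θ (1 / 2)) / 2)| = c / 2 := by
    rw [h (1 / 2) (by norm_num) 1 (by norm_num)]; norm_num; ring
  have hsplit : (θ 1 - θ 0) / 2 = (θ (1 / 2) - θ 0) / 2 + (θ 1 - θ (1 / 2)) / 2 := by ring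
  have hlt := Real.abs_sin_add_lt (abs_pos.mp (first_half ▸ half_pos hc))
    (abs_pos.mp (second_half ▸ half_pos hc))
  rw [← hsplit, first_half, second_half, add_halves] at hlt
  exact lt_irrefl c hlt
end

section
/- Let μ₁ and μ₂ be Borel probability measures on ℝ with finite first moments, and let f : ℝ → ℝ be continuously differentiable with bounded derivative. Then ∫ f dμ₁ − ∫ f dμ₂ = −∫_ℝ f'(z)·(F₁(z) − F₂(z)) dz, where Fᵢ(z) = μᵢ((−∞, z]). -/
/-!
By the fundamental theorem of calculus, `f x - f 0 = ∫ f'(z) (𝟙{z < x} - 𝟙{z < 0}) dz`. The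
kernel is supported on an interval of length `|x|` and `|f'| ≤ C`, so the first moment of `μ`
justifies Fubini, and integrating in `x` gives `∫ f dμ - f 0 = ∫ f'(z) (μ (z, ∞) - 𝟙{z < 0}) dz`.
Taking the strict inequality `z < x` makes the inner integral `μ (z, ∞) = 1 - F z` exactly, with
no almost-everywhere argument about atoms. Subtracting the identities for `μ₁` and `μ₂` cancels
`f 0` and the indicator.
-/

open MeasureTheory Set

section

variable {g : ℝ → ℝ}

lemma indicator_Iio_sub_indicator_Iio (a b z : ℝ) :
    (Iio b).indicator g z - (Iio a).indicator g z =
      (Ico a b).indicator g z - (Ico b a).indicator g z := by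
  simp only [indicator_apply, mem_Iio, mem_Ico]
  split_ifs <;> grind

lemma integral_indicator_Iio_sub_indicator_Iio {a b : ℝ}
    (hg : IntervalIntegrable g volume a b) :
    ∫ z, ((Iio b).indicator g z - (Iio a).indicator g z) = ∫ z in a..b, g z := by
  simp_rw [indicator_Iio_sub_indicator_Iio a b]
  rw [integral_sub ((hg.1.congr_set_ae Ico_ae_eq_Ioc).integrable_indicator measurableSet_Ico)
      ((hg.2.congr_set_ae Ico_ae_eq_Ioc).integrable_indicator measurableSet_Ico),
    integral_indicator measurableSet_Ico, integral_indicator measurableSet_Ico,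
    integral_Ico_eq_integral_Ioc, integral_Ico_eq_integral_Ioc]
  rfl

lemma abs_indicator_Iio_sub_indicator_Iio_le {C : ℝ} (hC : ∀ z, |g z| ≤ C) (a b z : ℝ) :
    |(Iio b).indicator g z - (Iio a).indicator g z| ≤ (uIcc a b).indicator (fun _ => C) z := by
  have hC0 : 0 ≤ C := (abs_nonneg _).trans (hC 0)
  have hCz := hC z
  rw [indicator_Iio_sub_indicator_Iio]
  simp only [indicator, mem_Ico, mem_uIcc]
  split_ifs <;> grind

lemma integrable_indicator_Iio_sub_indicator_Iio_prod {μ : Measure ℝ} [SFinite μ]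
    (hm : Integrable (fun x => |x|) μ) (hg : Measurable g) {C : ℝ} (hC : ∀ z, |g z| ≤ C) :
    Integrable (fun p : ℝ × ℝ => (Iio p.1).indicator g p.2 - (Iio 0).indicator g p.2)
      (μ.prod volume) := by
  have hmeas : AEStronglyMeasurable
      (fun p : ℝ × ℝ => (Iio p.1).indicator g p.2 - (Iio 0).indicator g p.2) (μ.prod volume) :=
    ((Measurable.ite (measurableSet_lt measurable_snd measurable_fst) (hg.comp measurable_snd)
      measurable_const).sub
        ((hg.indicator measurableSet_Iio).comp measurable_snd)).aestronglyMeasurable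
  have hbound (x : ℝ) : Integrable ((uIcc 0 x).indicator fun _ => C) :=
    (integrableOn_const (by simp)).integrable_indicator measurableSet_uIcc
  rw [integrable_prod_iff hmeas]
  refine ⟨ae_of_all _ fun x => (hbound x).mono'
    ((hg.indicator measurableSet_Iio).sub (hg.indicator measurableSet_Iio)).aestronglyMeasurable
      (ae_of_all _ (abs_indicator_Iio_sub_indicator_Iio_le hC 0 x)),
    (hm.const_mul C).mono' hmeas.norm.integral_prod_right' (ae_of_all _ fun x => ?_)⟩
  rw [Real.norm_of_nonneg (integral_nonneg fun _ => norm_nonneg _)]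
  calc ∫ z, ‖(Iio x).indicator g z - (Iio 0).indicator g z‖
      ≤ ∫ z, (uIcc 0 x).indicator (fun _ => C) z :=
        integral_mono_of_nonneg (ae_of_all _ fun _ => norm_nonneg _) (hbound x)
          (ae_of_all _ (abs_indicator_Iio_sub_indicator_Iio_le hC 0 x))
    _ = C * |x| := by
        rw [integral_indicator_const _ measurableSet_uIcc, Real.volume_real_interval, sub_zero,
          smul_eq_mul, mul_comm]

lemma integral_indicator_Iio_sub_indicator_Iio_over_endpoint (μ : Measure ℝ)
    [IsProbabilityMeasure μ] (g : ℝ → ℝ) (z : ℝ) :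
    ∫ x, ((Iio x).indicator g z - (Iio 0).indicator g z) ∂μ =
      g z * (μ.real (Ioi z) - (Iio 0).indicator 1 z) := by
  have h_flip (x : ℝ) : (Iio x).indicator g z = (Ioi z).indicator (fun _ => g z) x := by
    simp [indicator_apply]
  simp_rw [h_flip]
  rw [integral_sub ((integrable_const _).indicator measurableSet_Ioi) (integrable_const _),
    integral_indicator_const _ measurableSet_Ioi, integral_const, probReal_univ]
  simp only [indicator_apply, mem_Iio, mem_Ioi, smul_eq_mul, Pi.one_apply]
  split_ifs <;> ring

end

section

variable {μ : Measure ℝ} [IsProbabilityMeasure μ] {f : ℝ → ℝ} {C : ℝ}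

lemma intervalIntegrable_deriv_of_abs_le (hC : ∀ x, |deriv f x| ≤ C) (a b : ℝ) :
    IntervalIntegrable (deriv f) volume a b :=
  intervalIntegrable_const.mono_fun' (measurable_deriv f).aestronglyMeasurable
    (ae_of_all _ hC)

lemma sub_apply_zero_eq_integral_indicator_Iio_sub_indicator_Iio (hf : Differentiable ℝ f)
    (hC : ∀ x, |deriv f x| ≤ C) (x : ℝ) :
    f x - f 0 = ∫ z, ((Iio x).indicator (deriv f) z - (Iio 0).indicator (deriv f) z) := by
  rw [integral_indicator_Iio_sub_indicator_Iio (intervalIntegrable_deriv_of_abs_le hC 0 x),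
    intervalIntegral.integral_deriv_eq_sub (fun z _ => hf z)
      (intervalIntegrable_deriv_of_abs_le hC 0 x)]

lemma integrable_deriv_mul_measureReal_Ioi_sub_indicator_Iio
    (hm : Integrable (fun x => |x|) μ) (hC : ∀ x, |deriv f x| ≤ C) :
    Integrable (fun z => deriv f z * (μ.real (Ioi z) - (Iio 0).indicator 1 z)) :=
  (integrable_indicator_Iio_sub_indicator_Iio_prod hm (measurable_deriv f) hC).integral_prod_right
    |>.congr (ae_of_all _ (integral_indicator_Iio_sub_indicator_Iio_over_endpoint μ (deriv f)))

theorem integral_sub_apply_zero_eq_integral_deriv_mul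
    (hm : Integrable (fun x => |x|) μ) (hf : Differentiable ℝ f) (hC : ∀ x, |deriv f x| ≤ C) :
    ∫ x, f x ∂μ - f 0 = ∫ z, deriv f z * (μ.real (Ioi z) - (Iio 0).indicator 1 z) := by
  have hK := integrable_indicator_Iio_sub_indicator_Iio_prod hm (measurable_deriv f) hC
  have hFTC := sub_apply_zero_eq_integral_indicator_Iio_sub_indicator_Iio hf hC
  have hf_int : Integrable f μ := by
    have h_sub := hK.integral_prod_left.congr (ae_of_all _ fun x => (hFTC x).symm)
    exact (h_sub.add (integrable_const (f 0))).congr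
      (ae_of_all _ fun x => sub_add_cancel (f x) (f 0))
  calc ∫ x, f x ∂μ - f 0 = ∫ x, (f x - f 0) ∂μ := by
        rw [integral_sub hf_int (integrable_const _), integral_const, probReal_univ, one_smul]
    _ = ∫ x, (∫ z, ((Iio x).indicator (deriv f) z - (Iio 0).indicator (deriv f) z)) ∂μ :=
        integral_congr_ae (ae_of_all _ hFTC)
    _ = ∫ z, ∫ x, ((Iio x).indicator (deriv f) z - (Iio 0).indicator (deriv f) z) ∂μ :=
        integral_integral_swap hK
    _ = ∫ z, deriv f z * (μ.real (Ioi z) - (Iio 0).indicator 1 z) :=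
        integral_congr_ae
          (ae_of_all _ (integral_indicator_Iio_sub_indicator_Iio_over_endpoint μ (deriv f)))

end

/-- integration by parts against cumulative distribution functions: for
Borel probability measures `μ₁, μ₂` on `ℝ` with finite first moments and `f : ℝ → ℝ`
continuously differentiable with bounded derivative,
`∫ f dμ₁ − ∫ f dμ₂ = −∫ f'(z)·(F₁(z) − F₂(z)) dz`. -/
theorem integral_sub_eq_neg_integral_deriv_mul_cdf_diff
    (μ₁ μ₂ : Measure ℝ) [IsProbabilityMeasure μ₁] [IsProbabilityMeasure μ₂]
    (hm₁ : Integrable (fun x => |x|) μ₁) (hm₂ : Integrable (fun x => |x|) μ₂)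
    (f : ℝ → ℝ) (hf : ContDiff ℝ 1 f) (hf' : ∃ C, ∀ x, |deriv f x| ≤ C) :
    (∫ x, f x ∂μ₁) - (∫ x, f x ∂μ₂) =
      -∫ z, deriv f z * ((μ₁ (Set.Iic z)).toReal - (μ₂ (Set.Iic z)).toReal) := by
  obtain ⟨C, hC⟩ := hf'
  have hdf : Differentiable ℝ f := hf.differentiable one_ne_zero
  have hΔ (z : ℝ) :
      deriv f z * (μ₁.real (Ioi z) - (Iio 0).indicator 1 z)
        - deriv f z * (μ₂.real (Ioi z) - (Iio 0).indicator 1 z)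
      = -(deriv f z * ((μ₁ (Iic z)).toReal - (μ₂ (Iic z)).toReal)) := by
    simp only [← compl_Iic, probReal_compl_eq_one_sub measurableSet_Iic, measureReal_def]
    ring
  calc (∫ x, f x ∂μ₁) - (∫ x, f x ∂μ₂)
      = (∫ x, f x ∂μ₁ - f 0) - (∫ x, f x ∂μ₂ - f 0) := by ring
    _ = ∫ z, (deriv f z * (μ₁.real (Ioi z) - (Iio 0).indicator 1 z)
          - deriv f z * (μ₂.real (Ioi z) - (Iio 0).indicator 1 z)) := by
        rw [integral_sub_apply_zero_eq_integral_deriv_mul hm₁ hdf hC,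
          integral_sub_apply_zero_eq_integral_deriv_mul hm₂ hdf hC,
          integral_sub (integrable_deriv_mul_measureReal_Ioi_sub_indicator_Iio hm₁ hC)
            (integrable_deriv_mul_measureReal_Ioi_sub_indicator_Iio hm₂ hC)]
    _ = -∫ z, deriv f z * ((μ₁ (Iic z)).toReal - (μ₂ (Iic z)).toReal) := by
        simp only [hΔ, integral_neg]
end

section
/- Let m ≥ 1 and let ψ₁, ψ₂ : ℝᵐ → ℝ be Lipschitz, nonnegative, compactly supported functions with ∫ ψ₁ dx = ∫ ψ₂ dx = 1 (Lebesgue measure). Suppose a, u : ℝᵐ → ℝ are bounded Lipschitz functions such that: a ≥ 0; u is 1-Lipschitz; ‖∇u(x)‖ = 1 for almost every x with a(x) > 0 (where ∇u is the almost-everywhere defined gradient of the Lipschitz function u); and for every Lipschitz function f : ℝᵐ → ℝ, ∫ f(x)·(ψ₁(x) − ψ₂(x)) dx = ∫ ⟨∇f(x), a(x)·∇u(x)⟩ dx (the weak formulation of −div(a∇u) = ψ₁ − ψ₂). Then sup{ ∫ f(x)·(ψ₁(x) − ψ₂(x)) dx : f : ℝᵐ → ℝ 1-Lipschitz } = ∫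 a(x) dx. -/
/-!
Testing the weak equation with `u` itself gives `∫ u (ψ₁ - ψ₂) = ∫ a ‖∇u‖² = ∫ a`. Testing it with
`u - f` for a `1`-Lipschitz `f` gives `∫ (u - f) (ψ₁ - ψ₂) = ∫ a (‖∇u‖² - ⟪∇f, ∇u⟫) ≥ 0`, because
`‖∇f‖ ≤ 1 = ‖∇u‖` wherever `a > 0`. So `u` attains the Kantorovich supremum, and its value is `∫ a`.
-/

open MeasureTheory
open scoped RealInnerProductSpace

lemma LipschitzWith.of_abs_sub_le_norm {E : Type*} [SeminormedAddCommGroup E] {f : E → ℝ}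
    (h : ∀ x y, |f x - f y| ≤ ‖x - y‖) : LipschitzWith 1 f :=
  LipschitzWith.of_dist_le_mul fun x y => by simpa [Real.dist_eq, dist_eq_norm] using h x y

lemma real_inner_sub_self_nonneg_of_norm_le {E : Type*} [NormedAddCommGroup E]
    [InnerProductSpace ℝ E] {v w : E} (h : ‖v‖ ≤ ‖w‖) : 0 ≤ ⟪w - v, w⟫ := by
  rw [inner_sub_left, real_inner_self_eq_norm_sq, sub_nonneg]
  calc ⟪v, w⟫ ≤ ‖v‖ * ‖w‖ := real_inner_le_norm v w
    _ ≤ ‖w‖ ^ 2 := by rw [sq]; gcongr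

section Gradient

variable {E : Type*} [NormedAddCommGroup E] [InnerProductSpace ℝ E] [CompleteSpace E]

lemma norm_gradient_eq_norm_fderiv (f : E → ℝ) (x : E) : ‖gradient f x‖ = ‖fderiv ℝ f x‖ :=
  (InnerProductSpace.toDual ℝ E).symm.norm_map _

lemma LipschitzWith.norm_gradient_le {K : NNReal} {f : E → ℝ} (hf : LipschitzWith K f) (x : E) :
    ‖gradient f x‖ ≤ K :=
  norm_gradient_eq_norm_fderiv f x ▸ norm_fderiv_le_of_lipschitz ℝ hf

lemma gradient_fun_sub {f g : E → ℝ} {x : E} (hf : DifferentiableAt ℝ f x)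
    (hg : DifferentiableAt ℝ g x) :
    gradient (fun y => f y - g y) x = gradient f x - gradient g x := by
  simp only [gradient, fderiv_fun_sub hf hg, map_sub]

end Gradient

section WeakEquation

variable {E : Type*} [NormedAddCommGroup E] [InnerProductSpace ℝ E] [CompleteSpace E]
  [MeasurableSpace E] {μ : Measure E} {a u : E → ℝ}

lemma integral_inner_gradient_smul_gradient_self (ha : ∀ x, 0 ≤ a x)
    (hu_grad : ∀ᵐ x ∂μ, 0 < a x → ‖gradient u x‖ = 1) :
    ∫ x, ⟪gradient u x, a x • gradient u x⟫ ∂μ = ∫ x, a x ∂μ := by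
  refine integral_congr_ae ?_
  filter_upwards [hu_grad] with x hx
  rcases (ha x).eq_or_lt with h0 | h0
  · simp [← h0]
  · rw [real_inner_smul_right, real_inner_self_eq_norm_sq, hx h0, one_pow, mul_one]

variable [FiniteDimensional ℝ E] [BorelSpace E] [μ.IsAddHaarMeasure]

lemma integral_inner_gradient_sub_smul_gradient_nonneg {f : E → ℝ} (ha : ∀ x, 0 ≤ a x)
    (hu : LipschitzWith 1 u) (hf : LipschitzWith 1 f)
    (hu_grad : ∀ᵐ x ∂μ, 0 < a x → ‖gradient u x‖ = 1) :
    0 ≤ ∫ x, ⟪gradient (fun y => u y - f y) x, a x • gradient u x⟫ ∂μ := by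
  refine integral_nonneg_of_ae ?_
  filter_upwards [hu_grad, hu.ae_differentiableAt (μ := μ), hf.ae_differentiableAt (μ := μ)]
    with x hx hdu hdf
  rcases (ha x).eq_or_lt with h0 | h0
  · simp [← h0]
  · rw [gradient_fun_sub hdu hdf, real_inner_smul_right]
    refine mul_nonneg h0.le (real_inner_sub_self_nonneg_of_norm_le ?_)
    simpa [hx h0] using hf.norm_gradient_le x

lemma integral_mul_le_of_weak_divergence {ρ f : E → ℝ} (hρ : Continuous ρ)
    (hρ_supp : HasCompactSupport ρ) (ha : ∀ x, 0 ≤ a x) (hu : LipschitzWith 1 u)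
    (hu_grad : ∀ᵐ x ∂μ, 0 < a x → ‖gradient u x‖ = 1)
    (hweak : ∀ g : E → ℝ, (∃ K, LipschitzWith K g) →
      ∫ x, g x * ρ x ∂μ = ∫ x, ⟪gradient g x, a x • gradient u x⟫ ∂μ)
    (hf : LipschitzWith 1 f) :
    ∫ x, f x * ρ x ∂μ ≤ ∫ x, u x * ρ x ∂μ := by
  have hint : ∀ g : E → ℝ, Continuous g → Integrable (fun x => g x * ρ x) μ := fun g hg =>
    (hg.mul hρ).integrable_of_hasCompactSupport hρ_supp.mul_left
  have hsub : ∫ x, (u x - f x) * ρ x ∂μ = ∫ x, u x * ρ x ∂μ - ∫ x, f x * ρ x ∂μ := by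
    simp_rw [sub_mul]
    exact integral_sub (hint u hu.continuous) (hint f hf.continuous)
  have hnonneg : 0 ≤ ∫ x, (u x - f x) * ρ x ∂μ := by
    rw [hweak _ ⟨2, by simpa [one_add_one_eq_two] using hu.sub hf⟩]
    exact integral_inner_gradient_sub_smul_gradient_nonneg ha hu hf hu_grad
  linarith

end WeakEquation

theorem wasserstein_eq_integral_a_general
    (m : ℕ)
    (ψ₁ ψ₂ : EuclideanSpace ℝ (Fin m) → ℝ)
    (hψ₁_lip : ∃ K, LipschitzWith K ψ₁) (hψ₂_lip : ∃ K, LipschitzWith K ψ₂)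
    (hψ₁_supp : HasCompactSupport ψ₁) (hψ₂_supp : HasCompactSupport ψ₂)
    (a u : EuclideanSpace ℝ (Fin m) → ℝ)
    (ha_nonneg : ∀ x, 0 ≤ a x)
    (hu_lip : ∀ x y, |u x - u y| ≤ ‖x - y‖)
    (hu_grad : ∀ᵐ x, 0 < a x → ‖gradient u x‖ = 1)
    (hweak : ∀ f : EuclideanSpace ℝ (Fin m) → ℝ, (∃ K, LipschitzWith K f) →
      ∫ x, f x * (ψ₁ x - ψ₂ x) = ∫ x, ⟪gradient f x, a x • gradient u x⟫) :
    (⨆ f : {f : EuclideanSpace ℝ (Fin m) → ℝ // ∀ x y, |f x - f y| ≤ ‖x - y‖},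
      ENNReal.ofReal (∫ x, f.1 x * (ψ₁ x - ψ₂ x))) =
      ENNReal.ofReal (∫ x, a x) := by
  have hu : LipschitzWith 1 u := .of_abs_sub_le_norm hu_lip
  have hρ : Continuous fun x => ψ₁ x - ψ₂ x :=
    hψ₁_lip.choose_spec.continuous.sub hψ₂_lip.choose_spec.continuous
  have hρ_supp : HasCompactSupport fun x => ψ₁ x - ψ₂ x := hψ₁_supp.sub hψ₂_supp
  have hu_value : ∫ x, u x * (ψ₁ x - ψ₂ x) = ∫ x, a x := by
    rw [hweak u ⟨1, hu⟩, integral_inner_gradient_smul_gradient_self ha_nonneg hu_grad]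
  rw [← hu_value]
  refine le_antisymm (iSup_le fun f => ENNReal.ofReal_le_ofReal ?_)
    (le_iSup_of_le ⟨u, hu_lip⟩ le_rfl)
  exact integral_mul_le_of_weak_divergence hρ hρ_supp ha_nonneg hu hu_grad hweak
    (.of_abs_sub_le_norm f.2)

/-- if `−div(a ∇u) = ψ₁ − ψ₂` holds weakly, with `a ≥ 0` bounded Lipschitz,
`u` bounded `1`-Lipschitz and `‖∇u‖ = 1` a.e. on `{a > 0}`, then the Kantorovich dual
supremum between the probability densities `ψ₁` and `ψ₂` equals `∫ a(x) dx`. -/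
theorem wasserstein_eq_integral_a
    (m : ℕ) (hm : 1 ≤ m)
    (ψ₁ ψ₂ : EuclideanSpace ℝ (Fin m) → ℝ)
    (hψ₁_lip : ∃ K, LipschitzWith K ψ₁) (hψ₂_lip : ∃ K, LipschitzWith K ψ₂)
    (hψ₁_nonneg : ∀ x, 0 ≤ ψ₁ x) (hψ₂_nonneg : ∀ x, 0 ≤ ψ₂ x)
    (hψ₁_supp : HasCompactSupport ψ₁) (hψ₂_supp : HasCompactSupport ψ₂)
    (hψ₁_prob : ∫ x, ψ₁ x = 1) (hψ₂_prob : ∫ x, ψ₂ x = 1)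
    (a u : EuclideanSpace ℝ (Fin m) → ℝ)
    (ha_bdd : ∃ C, ∀ x, |a x| ≤ C) (ha_lip : ∃ K, LipschitzWith K a)
    (ha_nonneg : ∀ x, 0 ≤ a x)
    (hu_bdd : ∃ C, ∀ x, |u x| ≤ C)
    (hu_lip : ∀ x y, |u x - u y| ≤ ‖x - y‖)
    (hu_grad : ∀ᵐ x, 0 < a x → ‖gradient u x‖ = 1)
    (hweak : ∀ f : EuclideanSpace ℝ (Fin m) → ℝ, (∃ K, LipschitzWith K f) →
      ∫ x, f x * (ψ₁ x - ψ₂ x) = ∫ x, ⟪gradient f x, a x • gradient u x⟫) :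
    (⨆ f : {f : EuclideanSpace ℝ (Fin m) → ℝ // ∀ x y, |f x - f y| ≤ ‖x - y‖},
      ENNReal.ofReal (∫ x, f.1 x * (ψ₁ x - ψ₂ x))) =
      ENNReal.ofReal (∫ x, a x) :=
  wasserstein_eq_integral_a_general m ψ₁ ψ₂ hψ₁_lip hψ₂_lip hψ₁_supp hψ₂_supp a u ha_nonneg hu_lip
    hu_grad hweak
end
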